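/- arXiv:2507.00010 — 4 statements merged into one kernel-verified Lean document; each statement's English description precedes it below -/
import Mathlib

section
/- Let k be a positive integer and let f : ℝ → ℂ be a smooth function. Then for every t ∈ ℝ, f(t)·conj(f^{(k)}(t)) + f^{(k)}(t)·conj(f(t)) = Σ_{l=0}^{⌊k/2⌋} (−1)^l · (k/(k−l)) · binom(k−l, l) · (d^{k−2l}/dt^{k−2l}) |f^{(l)}(t)|². -/
open scoped BigOperators

section DifferentialIdentityAux
open scoped ContDiff
open Complex

/-- The coefficient appearing in the identity. -/
noncomputable def ccAux (k l : ℕ) : ℝ :=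
  (-1 : ℝ) ^ l * ((k : ℝ) / ((k : ℝ) - (l : ℝ))) * (Nat.choose (k - l) l : ℝ)

/-- `|f^{(l)}|²` as a complex-valued function. -/
noncomputable def MMAux (l : ℕ) (f : ℝ → ℂ) : ℝ → ℂ :=
  fun t => iteratedDeriv l f t * (starRingEnd ℂ) (iteratedDeriv l f t)

/-- The left-hand side. -/
noncomputable def LLAux (k : ℕ) (f : ℝ → ℂ) (t : ℝ) : ℂ :=
  f t * (starRingEnd ℂ) (iteratedDeriv k f t) + iteratedDeriv k f t * (starRingEnd ℂ) (f t)

/-- The right-hand side, complex-valued. -/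
noncomputable def RRAux (k : ℕ) (f : ℝ → ℂ) (t : ℝ) : ℂ :=
  ∑ l ∈ Finset.range (k / 2 + 1), (ccAux k l : ℂ) * iteratedDeriv (k - 2 * l) (MMAux l f) t

lemma smooth_iterAux {F : Type*} [NormedAddCommGroup F] [NormedSpace ℝ F]
    {f : ℝ → F} (hf : ContDiff ℝ ∞ f) (l : ℕ) : ContDiff ℝ ∞ (iteratedDeriv l f) := by
  rw [iteratedDeriv_eq_iterate]; exact ContDiff.iterate_deriv l hf

lemma smooth_MMAux {f : ℝ → ℂ} (hf : ContDiff ℝ ∞ f) (l : ℕ) : ContDiff ℝ ∞ (MMAux l f) :=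
  (smooth_iterAux hf l).mul
    (Complex.conjCLE.toContinuousLinearMap.contDiff.comp (smooth_iterAux hf l))

lemma hasDerivAt_iterAux {F : Type*} [NormedAddCommGroup F] [NormedSpace ℝ F]
    {f : ℝ → F} (hf : ContDiff ℝ ∞ f) (a : ℕ) (t : ℝ) :
    HasDerivAt (iteratedDeriv a f) (iteratedDeriv (a + 1) f t) t := by
  rw [iteratedDeriv_succ]
  exact (((smooth_iterAux hf a).differentiable (by norm_num)).differentiableAt).hasDerivAt

lemma hasDerivAt_prodAux {f : ℝ → ℂ} (hf : ContDiff ℝ ∞ f) (a b : ℕ) (t : ℝ) :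
    HasDerivAt (fun s => iteratedDeriv a f s * (starRingEnd ℂ) (iteratedDeriv b f s))
      (iteratedDeriv (a + 1) f t * (starRingEnd ℂ) (iteratedDeriv b f t)
        + iteratedDeriv a f t * (starRingEnd ℂ) (iteratedDeriv (b + 1) f t)) t := by
  have ha := hasDerivAt_iterAux hf a t
  have hb : HasDerivAt (fun s => (starRingEnd ℂ) (iteratedDeriv b f s))
      ((starRingEnd ℂ) (iteratedDeriv (b + 1) f t)) t := by
    simpa only [starRingEnd_apply] using (hasDerivAt_iterAux hf b t).star
  exact ha.mul hb

lemma LL_recAux {f : ℝ → ℂ} (hf : ContDiff ℝ ∞ f) (k : ℕ) (t : ℝ) :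
    LLAux (k + 2) f t = deriv (LLAux (k + 1) f) t - LLAux k (deriv f) t := by
  have hL : LLAux (k + 1) f
      = fun s => iteratedDeriv 0 f s * (starRingEnd ℂ) (iteratedDeriv (k + 1) f s)
        + iteratedDeriv (k + 1) f s * (starRingEnd ℂ) (iteratedDeriv 0 f s) := by
    funext s; simp [LLAux, iteratedDeriv_zero]
  have h1 := ((hasDerivAt_prodAux hf 0 (k + 1) t).fun_add (hasDerivAt_prodAux hf (k + 1) 0 t)).deriv
  rw [hL, h1]
  have h2 : iteratedDeriv k (deriv f) = iteratedDeriv (k + 1) f := (iteratedDeriv_succ' ..).symm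
  simp only [LLAux, h2, iteratedDeriv_zero, show (0 : ℕ) + 1 = 1 from rfl,
    show k + 1 + 1 = k + 2 from rfl, iteratedDeriv_one]
  ring

lemma cc_recAux (k l : ℕ) (hk : 1 ≤ k) (hl : l ≤ k / 2) :
    ccAux (k + 2) (l + 1) = ccAux (k + 1) (l + 1) - ccAux k l := by
  have h2l : 2 * l ≤ k := by omega
  rcases eq_or_lt_of_le h2l with h | h
  · have hl1 : 1 ≤ l := by omega
    have e1 : k + 2 - (l + 1) = l + 1 := by omega
    have e2 : k + 1 - (l + 1) = l := by omega
    have e3 : k - l = l := by omega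
    rw [ccAux, ccAux, ccAux, e1, e2, e3, Nat.choose_self, Nat.choose_self,
      Nat.choose_eq_zero_of_lt (by omega : l < l + 1)]
    have hkr : (k : ℝ) = 2 * l := by push_cast [← h]; ring
    have hlne : (l : ℝ) ≠ 0 := by positivity
    push_cast
    rw [hkr]
    rw [show 2 * (l : ℝ) - l = l by ring, show 2 * (l : ℝ) + 2 - (l + 1) = l + 1 by ring,
      show 2 * (l : ℝ) + 2 = 2 * (l + 1) by ring, mul_div_assoc,
      div_self (by positivity : (l : ℝ) + 1 ≠ 0), mul_div_assoc, div_self hlne, pow_succ]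
    ring
  · set n := k - l with hn
    have e1 : k + 2 - (l + 1) = n + 1 := by omega
    have e2 : k + 1 - (l + 1) = n := by omega
    have hP : ((n + 1).choose (l + 1) : ℝ) = n.choose l + n.choose (l + 1) := by
      exact_mod_cast congrArg Nat.cast (Nat.choose_succ_succ n l)
    have hX : (n.choose (l + 1) : ℝ) * (l + 1) = n.choose l * ((k : ℝ) - l - l) := by
      have h0 := Nat.choose_succ_right_eq n l
      have hln : l ≤ n := by omega
      have hnr : ((n : ℕ) : ℝ) = (k : ℝ) - l := by
        rw [hn, Nat.cast_sub (by omega : l ≤ k)]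
      calc (n.choose (l + 1) : ℝ) * (l + 1)
          = ((n.choose (l + 1) * (l + 1) : ℕ) : ℝ) := by push_cast; ring
        _ = ((n.choose l * (n - l) : ℕ) : ℝ) := by rw [h0]
        _ = n.choose l * ((k : ℝ) - l - l) := by
            rw [Nat.cast_mul, Nat.cast_sub hln, hnr]
    have hlk : (l : ℝ) < k := by exact_mod_cast (by omega : l < k)
    have hd2 : (k : ℝ) - l ≠ 0 := by intro hc; nlinarith
    have hd3 : (k : ℝ) + 2 - (l + 1) ≠ 0 := by intro hc; nlinarith
    rw [ccAux, ccAux, ccAux, e1, e2, ← hn]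
    push_cast [hP]
    have hd4 : (k : ℝ) + 1 - (l + 1) ≠ 0 := by intro hc; nlinarith
    field_simp
    linear_combination ((-1 : ℝ) ^ l) * ((k : ℝ) - l) * hX

lemma cc_zeroAux (k : ℕ) (hk : 1 ≤ k) : ccAux k 0 = 1 := by
  rw [ccAux]
  have : (k : ℝ) ≠ 0 := by positivity
  simp [div_self this]

lemma RR_recAux {f : ℝ → ℂ} (hf : ContDiff ℝ ∞ f) (k : ℕ) (hk : 1 ≤ k) (t : ℝ) :
    RRAux (k + 2) f t = deriv (RRAux (k + 1) f) t - RRAux k (deriv f) t := by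
  have hf' : ContDiff ℝ ∞ (deriv f) := (contDiff_infty_iff_deriv.mp hf).2
  -- the derivative of `RRAux (k+1) f`
  have hder : deriv (RRAux (k + 1) f) t
      = ∑ l ∈ Finset.range ((k + 1) / 2 + 1),
          (ccAux (k + 1) l : ℂ) * iteratedDeriv (k + 2 - 2 * l) (MMAux l f) t := by
    have hrr : RRAux (k + 1) f = fun s => ∑ l ∈ Finset.range ((k + 1) / 2 + 1),
        (ccAux (k + 1) l : ℂ) * iteratedDeriv (k + 1 - 2 * l) (MMAux l f) s := rfl
    rw [hrr, deriv_fun_sum (fun l _ => ((smooth_iterAux (smooth_MMAux hf l) _).differentiable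
      (by norm_num)).differentiableAt.const_mul _)]
    refine Finset.sum_congr rfl fun l hl => ?_
    rw [deriv_const_mul _ ((smooth_iterAux (smooth_MMAux hf l) _).differentiable
      (by norm_num)).differentiableAt, ← iteratedDeriv_succ,
      show k + 1 - 2 * l + 1 = k + 2 - 2 * l by
        have := Finset.mem_range.mp hl
        omega]
  -- extend the summation range to `k / 2 + 2`
  have hext : ∑ l ∈ Finset.range ((k + 1) / 2 + 1),
        (ccAux (k + 1) l : ℂ) * iteratedDeriv (k + 2 - 2 * l) (MMAux l f) t
      = ∑ l ∈ Finset.range (k / 2 + 2),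
        (ccAux (k + 1) l : ℂ) * iteratedDeriv (k + 2 - 2 * l) (MMAux l f) t := by
    refine Finset.sum_subset (Finset.range_subset_range.mpr (by omega)) fun l _ hl => ?_
    have h1 : (k + 1) / 2 + 1 ≤ l := by
      by_contra hc
      exact hl (Finset.mem_range.mpr (by omega))
    have h2 : k + 1 - l < l := by omega
    rw [ccAux, Nat.choose_eq_zero_of_lt h2]
    simp
  -- rewrite `RRAux k (deriv f)`
  have hshift : RRAux k (deriv f) t
      = ∑ l ∈ Finset.range (k / 2 + 1),
          (ccAux k l : ℂ) * iteratedDeriv (k + 2 - 2 * (l + 1)) (MMAux (l + 1) f) t := by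
    rw [RRAux]
    refine Finset.sum_congr rfl fun l hl => ?_
    have hm : MMAux l (deriv f) = MMAux (l + 1) f := by
      funext s
      rw [MMAux, MMAux, ← iteratedDeriv_succ']
    rw [hm, show k - 2 * l = k + 2 - 2 * (l + 1) by omega]
  rw [hder, hext, hshift, RRAux,
    show (k + 2) / 2 + 1 = k / 2 + 2 by omega]
  rw [Finset.sum_range_succ' (fun l => (ccAux (k + 2) l : ℂ)
      * iteratedDeriv (k + 2 - 2 * l) (MMAux l f) t) (k / 2 + 1),
    Finset.sum_range_succ' (fun l => (ccAux (k + 1) l : ℂ)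
      * iteratedDeriv (k + 2 - 2 * l) (MMAux l f) t) (k / 2 + 1)]
  rw [cc_zeroAux (k + 2) (by omega), cc_zeroAux (k + 1) (by omega)]
  have hterm : ∑ l ∈ Finset.range (k / 2 + 1),
        (ccAux (k + 2) (l + 1) : ℂ) * iteratedDeriv (k + 2 - 2 * (l + 1)) (MMAux (l + 1) f) t
      = ∑ l ∈ Finset.range (k / 2 + 1),
        ((ccAux (k + 1) (l + 1) : ℂ) * iteratedDeriv (k + 2 - 2 * (l + 1)) (MMAux (l + 1) f) t
          - (ccAux k l : ℂ) * iteratedDeriv (k + 2 - 2 * (l + 1)) (MMAux (l + 1) f) t) := by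
    refine Finset.sum_congr rfl fun l hl => ?_
    have hl' : l ≤ k / 2 := by
      have := Finset.mem_range.mp hl; omega
    rw [cc_recAux k l hk hl']
    push_cast
    ring
  rw [hterm, Finset.sum_sub_distrib]
  ring

lemma base1Aux {f : ℝ → ℂ} (hf : ContDiff ℝ ∞ f) (t : ℝ) : LLAux 1 f t = RRAux 1 f t := by
  rw [RRAux]
  simp only [show (1 : ℕ) / 2 + 1 = 1 from rfl, Finset.sum_range_one, Nat.mul_zero,
    Nat.sub_zero, iteratedDeriv_one]
  have hM : MMAux 0 f = fun s => iteratedDeriv 0 f s * (starRingEnd ℂ) (iteratedDeriv 0 f s) := rfl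
  rw [hM, (hasDerivAt_prodAux hf 0 0 t).deriv, cc_zeroAux 1 (by omega)]
  simp only [LLAux, iteratedDeriv_zero, show (0 : ℕ) + 1 = 1 from rfl, iteratedDeriv_one]
  push_cast
  ring

lemma base2Aux {f : ℝ → ℂ} (hf : ContDiff ℝ ∞ f) (t : ℝ) : LLAux 2 f t = RRAux 2 f t := by
  rw [RRAux]
  rw [show (2 : ℕ) / 2 + 1 = 2 from rfl, Finset.sum_range_succ, Finset.sum_range_one]
  have hM0 : MMAux 0 f = fun s => iteratedDeriv 0 f s * (starRingEnd ℂ) (iteratedDeriv 0 f s) := rfl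
  have hd1 : deriv (MMAux 0 f) = fun s =>
      iteratedDeriv 1 f s * (starRingEnd ℂ) (iteratedDeriv 0 f s)
        + iteratedDeriv 0 f s * (starRingEnd ℂ) (iteratedDeriv 1 f s) := by
    funext s
    rw [hM0, (hasDerivAt_prodAux hf 0 0 s).deriv]
  have h2 : iteratedDeriv 2 (MMAux 0 f) t
      = iteratedDeriv 2 f t * (starRingEnd ℂ) (iteratedDeriv 0 f t)
        + 2 * (iteratedDeriv 1 f t * (starRingEnd ℂ) (iteratedDeriv 1 f t))
        + iteratedDeriv 0 f t * (starRingEnd ℂ) (iteratedDeriv 2 f t) := by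
    rw [iteratedDeriv_succ, iteratedDeriv_one, hd1,
      ((hasDerivAt_prodAux hf 1 0 t).fun_add (hasDerivAt_prodAux hf 0 1 t)).deriv]
    norm_num
    ring
  have hcc1 : ccAux 2 1 = -2 := by
    rw [ccAux]
    norm_num
  rw [h2, hcc1, cc_zeroAux 2 (by omega)]
  simp only [LLAux, MMAux, iteratedDeriv_zero, Nat.mul_one, Nat.sub_self, iteratedDeriv_zero]
  push_cast
  ring

lemma mainAux : ∀ m : ℕ, (∀ f : ℝ → ℂ, ContDiff ℝ ∞ f → ∀ t, LLAux (m + 1) f t = RRAux (m + 1) f t)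
    ∧ (∀ f : ℝ → ℂ, ContDiff ℝ ∞ f → ∀ t, LLAux (m + 2) f t = RRAux (m + 2) f t) := by
  intro m
  induction m with
  | zero => exact ⟨fun f hf t => base1Aux hf t, fun f hf t => base2Aux hf t⟩
  | succ m ih =>
    refine ⟨fun f hf t => ih.2 f hf t, fun f hf t => ?_⟩
    have hf' : ContDiff ℝ ∞ (deriv f) := (contDiff_infty_iff_deriv.mp hf).2
    rw [show m + 1 + 2 = m + 1 + 2 from rfl, LL_recAux hf (m + 1) t,
      RR_recAux hf (m + 1) (by omega) t]
    have hLR : LLAux (m + 1 + 1) f = RRAux (m + 1 + 1) f := by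
      funext s
      exact ih.2 f hf s
    rw [hLR]
    have := ih.1 (deriv f) hf' t
    rw [this]

lemma ofReal_iteratedDerivAux {g : ℝ → ℝ} (hg : ContDiff ℝ ∞ g) (n : ℕ) (t : ℝ) :
    iteratedDeriv n (fun s => ((g s : ℝ) : ℂ)) t = ((iteratedDeriv n g t : ℝ) : ℂ) := by
  induction n generalizing g with
  | zero => simp
  | succ n ih =>
    rw [iteratedDeriv_succ', iteratedDeriv_succ']
    have hd : deriv (fun s => ((g s : ℝ) : ℂ)) = fun s => ((deriv g s : ℝ) : ℂ) := by
      funext s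
      exact (((hg.differentiable (by norm_num)).differentiableAt).hasDerivAt.ofReal_comp).deriv
    rw [hd]
    exact ih (contDiff_infty_iff_deriv.mp hg).2

lemma MM_eqAux (l : ℕ) (f : ℝ → ℂ) :
    MMAux l f = fun s => ((‖iteratedDeriv l f s‖ ^ 2 : ℝ) : ℂ) := by
  funext s
  rw [MMAux, Complex.mul_conj, Complex.normSq_eq_norm_sq]

lemma smooth_normSqAux {f : ℝ → ℂ} (hf : ContDiff ℝ ∞ f) (l : ℕ) :
    ContDiff ℝ ∞ (fun s => ‖iteratedDeriv l f s‖ ^ 2) := by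
  have : (fun s => ‖iteratedDeriv l f s‖ ^ 2) = fun s => (MMAux l f s).re := by
    funext s
    rw [MM_eqAux]
    exact (Complex.ofReal_re _).symm
  rw [this]
  exact Complex.reCLM.contDiff.comp (smooth_MMAux hf l)

end DifferentialIdentityAux

/-- **Differential identity (Identity 1).** For a smooth `f : ℝ → ℂ` and a positive
integer `k`, `f·conj(f⁽ᵏ⁾) + f⁽ᵏ⁾·conj(f)` equals the sum
`Σ_{l=0}^{⌊k/2⌋} (−1)^l (k/(k−l)) C(k−l,l) dᵏ⁻²ˡ/dtᵏ⁻²ˡ |f⁽ˡ⁾|²`. -/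
theorem differential_identity (k : ℕ) (hk : 0 < k) (f : ℝ → ℂ)
    (hf : ContDiff ℝ (⊤ : ℕ∞) f) (t : ℝ) :
    f t * (starRingEnd ℂ) (iteratedDeriv k f t)
      + iteratedDeriv k f t * (starRingEnd ℂ) (f t) =
    ((∑ l ∈ Finset.range (k / 2 + 1),
        (-1 : ℝ) ^ l * ((k : ℝ) / ((k : ℝ) - (l : ℝ))) * (Nat.choose (k - l) l : ℝ) *
          iteratedDeriv (k - 2 * l) (fun s : ℝ => ‖iteratedDeriv l f s‖ ^ 2) t : ℝ) : ℂ) := by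
  have hf' : ContDiff ℝ (⊤ : ℕ∞) f := hf.of_le (by simp)
  obtain ⟨m, rfl⟩ : ∃ m, k = m + 1 := ⟨k - 1, by omega⟩
  have h := (mainAux m).1 f hf' t
  have hL : LLAux (m + 1) f t
      = f t * (starRingEnd ℂ) (iteratedDeriv (m + 1) f t)
        + iteratedDeriv (m + 1) f t * (starRingEnd ℂ) (f t) := rfl
  rw [← hL, h, RRAux, Complex.ofReal_sum]
  refine Finset.sum_congr rfl fun l hl => ?_
  rw [MM_eqAux l f, ofReal_iteratedDerivAux (smooth_normSqAux hf' l) _ t]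
  rw [ccAux]
  push_cast
  ring
end

section
/- Let f : ℝ → ℂ be a Schwartz function, let a, b, c, d, τ, η ∈ ℝ with b ≠ 0 and ad − bc = 1, let p be a natural number and ξ_m ∈ ℝ. Set g(t) = e^{i(a/(2b))t²} f(t) and σ_m = (ξ_m − τ)/(2πb). Then ∫_ℝ (ξ − ξ_m)^{2p} |O_f^J(ξ)|² dξ = (2πb)^{2p} ∫_ℝ (σ − σ_m)^{2p} |ĝ(σ)|² dσ. -/
open MeasureTheory Real
open scoped FourierTransform

/-- The offset linear canonical transform (OLCT) with parameters `a, b, d, τ, η` (up to the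
unimodular constant of the kernel, which does not affect the modulus). -/
noncomputable def OLCT (a b d τ η : ℝ) (f : ℝ → ℂ) (ξ : ℝ) : ℂ :=
  ((Real.sqrt (2 * π * |b|))⁻¹ : ℝ) *
    ∫ t : ℝ, f t * Complex.exp (Complex.I *
      (((a / (2 * b)) * t ^ 2 - (1 / b) * t * (ξ - τ) - (1 / b) * ξ * (d * τ - b * η)
        + (d / (2 * b)) * (ξ ^ 2 + τ ^ 2) : ℝ) : ℂ))

/-! Splitting the OLCT kernel into a `ξ`-only phase, a Fourier character at `σ = (ξ - τ)/(2πb)`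
and the chirp `e^{i(a/(2b))t²}` gives `|O_f^J(ξ)|² = |ĝ(σ)|² / (2π|b|)`. The substitution
`ξ = 2πb σ + τ` then turns the `ξ`-moment into the `σ`-moment, its Jacobian `|2πb|` cancelling
the factor `1/(2π|b|)`. -/

theorem integral_pow_sub_mul_comp_sub_div (G : ℝ → ℝ) (n : ℕ) {r : ℝ} (hr : r ≠ 0) (τ ξm : ℝ) :
    ∫ ξ : ℝ, (ξ - ξm) ^ n * G ((ξ - τ) / r) =
      |r| * r ^ n * ∫ σ : ℝ, (σ - (ξm - τ) / r) ^ n * G σ := by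
  have hξ (ξ : ℝ) : ξ - ξm = r * ((ξ - τ) / r - (ξm - τ) / r) := by
    field_simp
    ring
  simp_rw [hξ, mul_pow, mul_assoc]
  rw [integral_sub_right_eq_self (fun x => r ^ n * ((x / r - (ξm - τ) / r) ^ n * G (x / r))) τ,
    Measure.integral_comp_div (fun σ => r ^ n * ((σ - (ξm - τ) / r) ^ n * G σ)),
    integral_const_mul, smul_eq_mul]

theorem olct_eq_exp_mul_fourier_chirp (f : ℝ → ℂ) (a b d τ η : ℝ) (hb : b ≠ 0) (ξ : ℝ) :
    OLCT a b d τ η f ξ =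
      ((Real.sqrt (2 * π * |b|))⁻¹ : ℝ) *
        (Complex.exp ((((d / (2 * b)) * (ξ ^ 2 + τ ^ 2) - (1 / b) * ξ * (d * τ - b * η) : ℝ) : ℂ)
            * Complex.I) *
          𝓕 (fun u : ℝ => Complex.exp (Complex.I * ((a / (2 * b) : ℝ) : ℂ) * (u : ℂ) ^ 2) * f u)
            ((ξ - τ) / (2 * π * b))) := by
  rw [OLCT, Real.fourier_real_eq_integral_exp_smul, ← integral_const_mul (Complex.exp _)]
  congr 1
  refine integral_congr_ae (.of_forall fun t => ?_)
  dsimp only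
  have hcharacter : (-2 * π * t * ((ξ - τ) / (2 * π * b)) : ℝ) = -((1 / b) * t * (ξ - τ)) := by
    field_simp
  simp only [hcharacter, smul_eq_mul, ← mul_assoc, ← Complex.exp_add]
  rw [mul_comm (f t)]
  congr 2
  push_cast
  ring

theorem norm_olct_sq (f : ℝ → ℂ) (a b d τ η : ℝ) (hb : b ≠ 0) (ξ : ℝ) :
    ‖OLCT a b d τ η f ξ‖ ^ 2 =
      (2 * π * |b|)⁻¹ *
        ‖𝓕 (fun u : ℝ => Complex.exp (Complex.I * ((a / (2 * b) : ℝ) : ℂ) * (u : ℂ) ^ 2) * f u)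
          ((ξ - τ) / (2 * π * b))‖ ^ 2 := by
  rw [olct_eq_exp_mul_fourier_chirp f a b d τ η hb, norm_mul, norm_mul,
    Complex.norm_exp_ofReal_mul_I, one_mul, Complex.norm_real, Real.norm_eq_abs,
    abs_of_nonneg (by positivity), mul_pow, inv_pow, Real.sq_sqrt (by positivity)]

theorem olct_moment_eq_fourier_moment_general (f : SchwartzMap ℝ ℂ) (a b d τ η : ℝ)
    (hb : b ≠ 0) (p : ℕ) (ξm : ℝ) :
    ∫ ξ : ℝ, (ξ - ξm) ^ (2 * p) * ‖OLCT a b d τ η (⇑f) ξ‖ ^ 2 =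
      (2 * π * b) ^ (2 * p) *
        ∫ σ : ℝ, (σ - (ξm - τ) / (2 * π * b)) ^ (2 * p) *
          ‖𝓕 (fun u : ℝ => Complex.exp (Complex.I * ((a / (2 * b) : ℝ) : ℂ) * (u : ℂ) ^ 2) * f u) σ‖ ^ 2 := by
  set G : ℝ → ℝ := fun σ =>
    ‖𝓕 (fun u : ℝ => Complex.exp (Complex.I * ((a / (2 * b) : ℝ) : ℂ) * (u : ℂ) ^ 2) * f u) σ‖ ^ 2
  have hr : 2 * π * b ≠ 0 := by positivity
  have hjacobian : |2 * π * b| = 2 * π * |b| := by rw [abs_mul, abs_of_pos two_pi_pos]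
  simp_rw [norm_olct_sq (⇑f) a b d τ η hb]
  rw [integral_pow_sub_mul_comp_sub_div (fun σ => (2 * π * |b|)⁻¹ * G σ) (2 * p) hr,
    hjacobian]
  simp_rw [mul_left_comm _ (2 * π * |b|)⁻¹]
  rw [integral_const_mul, ← mul_assoc, mul_right_comm _ _ (2 * π * |b|)⁻¹,
    mul_inv_cancel₀ (by positivity), one_mul]

/-- **Change-of-variables identity (equation (16)).** With `g(t) = e^{i(a/(2b))t²} f(t)` and
`σₘ = (ξₘ − τ)/(2πb)`,
`∫ (ξ − ξₘ)^{2p} |O_f^J(ξ)|² dξ = (2πb)^{2p} ∫ (σ − σₘ)^{2p} |ĝ(σ)|² dσ`. -/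
theorem olct_moment_eq_fourier_moment (f : SchwartzMap ℝ ℂ) (a b c d τ η : ℝ)
    (hb : b ≠ 0) (hdet : a * d - b * c = 1) (p : ℕ) (ξm : ℝ) :
    ∫ ξ : ℝ, (ξ - ξm) ^ (2 * p) * ‖OLCT a b d τ η (⇑f) ξ‖ ^ 2 =
      (2 * π * b) ^ (2 * p) *
        ∫ σ : ℝ, (σ - (ξm - τ) / (2 * π * b)) ^ (2 * p) *
          ‖𝓕 (fun u : ℝ => Complex.exp (Complex.I * ((a / (2 * b) : ℝ) : ℂ) * (u : ℂ) ^ 2) * f u) σ‖ ^ 2 :=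
  olct_moment_eq_fourier_moment_general f a b d τ η hb p ξm
end

section
/- Let a, b, c, d, τ, η ∈ ℝ with b ≠ 0 and ad − bc = 1, let t_m, ξ_m ∈ ℝ, let c₀ ∈ ℂ with c₀ ≠ 0 and c_p > 0, and define f(t) = c₀ · e^{−c_p (t − t_m)²} · e^{i( ((ξ_m − τ)/b) t − (a/(2b)) t² )}. Then equality holds in the second-order Heisenberg uncertainty principle in the OLCT domain: (∫_ℝ (t − t_m)² |f(t)|² dt) · (∫_ℝ (ξ − ξ_m)² |O_f^J(ξ)|² dξ) = (b²/4) · (∫_ℝ |f(t)|² dt)². -/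
/-!
The chirp factor `e^{-i a t²/(2b)}` of `f` cancels the quadratic phase of the OLCT kernel, so
`O_f^J` is a Gaussian integral: both `|f|²` and `|O_f^J|²` are Gaussians, centred at `tₘ` and `ξₘ`
with exponents `2c_p (t - tₘ)²` and `(ξ - ξₘ)²/(2c_p b²)`. The second moment of
`C e^{-α(x-m)²}` about `m` is `(2α)⁻¹` times its mass, so the left side is
`(4c_p)⁻¹ · c_p b² = b²/4` times the product of the two masses, and these masses agree.
-/

open MeasureTheory Real

lemma integral_sq_mul_exp_neg_mul_sq {α : ℝ} (hα : 0 < α) :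
    ∫ x : ℝ, x ^ 2 * rexp (-α * x ^ 2) = √(π / α) / (2 * α) := by
  have h_even : ∫ x : ℝ, x ^ 2 * rexp (-α * x ^ 2)
      = 2 * ∫ x in Set.Ioi (0 : ℝ), x ^ 2 * rexp (-α * x ^ 2) := by
    have h_abs := integral_comp_abs (f := fun x : ℝ => x ^ 2 * rexp (-α * x ^ 2))
    simp only [sq_abs] at h_abs
    exact h_abs
  have h_half := integral_rpow_mul_exp_neg_mul_rpow two_pos (by norm_num : (-1 : ℝ) < 2) hα
  simp only [rpow_two] at h_half
  have hΓ : Gamma ((2 + 1) / 2) = √π / 2 := by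
    rw [show (2 + 1) / 2 = (1 / 2 : ℝ) + 1 by norm_num, Gamma_add_one (by norm_num),
      Gamma_one_half_eq]
    ring
  have hpow : α ^ (-(2 + 1) / 2 : ℝ) = (α * √α)⁻¹ := by
    rw [show -(2 + 1) / 2 = -(1 + 1 / 2 : ℝ) by norm_num, rpow_neg hα.le, rpow_add hα, rpow_one,
      ← sqrt_eq_rpow]
  have hsqrt : √α * √α = α := mul_self_sqrt hα.le
  rw [h_even, h_half, hΓ, hpow, sqrt_div pi_pos.le]
  field_simp

lemma integral_shifted_gaussian (α C m : ℝ) :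
    ∫ x : ℝ, C * rexp (-α * (x - m) ^ 2) = C * √(π / α) := by
  rw [integral_const_mul, integral_sub_right_eq_self (fun x => rexp (-α * x ^ 2)) m,
    integral_gaussian]

lemma integral_sub_sq_mul_shifted_gaussian {α : ℝ} (hα : 0 < α) (C m : ℝ) :
    ∫ x : ℝ, (x - m) ^ 2 * (C * rexp (-α * (x - m) ^ 2)) =
      (2 * α)⁻¹ * ∫ x : ℝ, C * rexp (-α * (x - m) ^ 2) := by
  simp_rw [mul_left_comm _ C]
  rw [integral_const_mul, integral_sub_right_eq_self (fun x => x ^ 2 * rexp (-α * x ^ 2)) m,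
    integral_sq_mul_exp_neg_mul_sq hα, integral_shifted_gaussian]
  ring

lemma norm_integral_cexp_quadratic {p : ℝ} (hp : 0 < p) (u v : ℝ) (w : ℂ) :
    ‖∫ t : ℝ, Complex.exp (-(p : ℂ) * t ^ 2 + (u + v * Complex.I) * t + w)‖ =
      √(π / p) * rexp ((u ^ 2 - v ^ 2) / (4 * p) + w.re) := by
  have hp' : (p : ℂ) ≠ 0 := by exact_mod_cast hp.ne'
  rw [integral_cexp_quadratic (by simpa using hp), norm_mul, Complex.norm_exp, neg_neg,
    show (π : ℂ) / p = ((π / p : ℝ) : ℂ) by push_cast; rfl,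
    show (1 / 2 : ℂ) = ((1 / 2 : ℝ) : ℂ) by norm_num,
    ← Complex.ofReal_cpow (by positivity), ← sqrt_eq_rpow, Complex.norm_real,
    norm_of_nonneg (sqrt_nonneg _)]
  congr 2
  have hre : ((u + v * Complex.I) ^ 2 / (4 * -(p : ℂ))).re = (v ^ 2 - u ^ 2) / (4 * p) := by
    rw [show (u + v * Complex.I) ^ 2 / (4 * -(p : ℂ)) = (((v ^ 2 - u ^ 2) / (4 * p) : ℝ) : ℂ)
        + ((-(2 * u * v) / (4 * p) : ℝ) : ℂ) * Complex.I by
      push_cast; field_simp; linear_combination (-(v : ℂ) ^ 2) * Complex.I_sq]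
    rw [Complex.add_re, Complex.ofReal_re, Complex.re_ofReal_mul, Complex.I_re, mul_zero, add_zero]
  rw [Complex.sub_re, hre]
  ring

noncomputable def gaussianChirp (c₀ : ℂ) (cp tm ν κ : ℝ) (t : ℝ) : ℂ :=
  c₀ * Complex.exp (-((cp : ℂ) * ((t : ℂ) - (tm : ℂ)) ^ 2)) *
    Complex.exp (Complex.I * ((ν * t - κ * t ^ 2 : ℝ) : ℂ))

lemma norm_gaussianChirp_sq (c₀ : ℂ) (cp tm ν κ t : ℝ) :
    ‖gaussianChirp c₀ cp tm ν κ t‖ ^ 2 = ‖c₀‖ ^ 2 * rexp (-(2 * cp) * (t - tm) ^ 2) := by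
  rw [gaussianChirp, norm_mul, norm_mul, Complex.norm_exp_I_mul_ofReal, mul_one,
    show -((cp : ℂ) * ((t : ℂ) - (tm : ℂ)) ^ 2) = ((-(cp * (t - tm) ^ 2) : ℝ) : ℂ) by
      push_cast; ring,
    Complex.norm_exp_ofReal, mul_pow, sq (rexp _), ← exp_add]
  ring_nf

lemma gaussianChirp_mul_OLCT_kernel (a b d τ η : ℝ) (c₀ : ℂ) (cp tm ξm ξ t : ℝ) :
    gaussianChirp c₀ cp tm ((ξm - τ) / b) (a / (2 * b)) t * Complex.exp (Complex.I *
      (((a / (2 * b)) * t ^ 2 - (1 / b) * t * (ξ - τ) - (1 / b) * ξ * (d * τ - b * η)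
        + (d / (2 * b)) * (ξ ^ 2 + τ ^ 2) : ℝ) : ℂ)) =
    c₀ * Complex.exp (-(cp : ℂ) * t ^ 2
      + (((2 * cp * tm : ℝ) : ℂ) + ((ξm - ξ) / b : ℝ) * Complex.I) * t
      + (((-(cp * tm ^ 2) : ℝ) : ℂ)
        + ((-(1 / b) * ξ * (d * τ - b * η) + (d / (2 * b)) * (ξ ^ 2 + τ ^ 2) : ℝ) : ℂ) * Complex.I)) := by
  rw [gaussianChirp, mul_assoc, mul_assoc, ← Complex.exp_add, ← Complex.exp_add]
  congr 2
  push_cast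
  field_simp
  ring

lemma norm_OLCT_gaussianChirp_sq (a b d τ η : ℝ) (hb : b ≠ 0) (c₀ : ℂ) {cp : ℝ} (hcp : 0 < cp)
    (tm ξm ξ : ℝ) :
    ‖OLCT a b d τ η (gaussianChirp c₀ cp tm ((ξm - τ) / b) (a / (2 * b))) ξ‖ ^ 2 =
      ‖c₀‖ ^ 2 / (2 * cp * |b|) * rexp (-(2 * cp * b ^ 2)⁻¹ * (ξ - ξm) ^ 2) := by
  simp_rw [OLCT, gaussianChirp_mul_OLCT_kernel a b d τ η]
  rw [integral_const_mul, norm_mul, norm_mul, norm_integral_cexp_quadratic hcp, Complex.norm_real,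
    norm_of_nonneg (by positivity)]
  simp only [Complex.add_re, Complex.ofReal_re, Complex.re_ofReal_mul, Complex.I_re, mul_zero,
    add_zero]
  rw [mul_pow, mul_pow, mul_pow, inv_pow, sq_sqrt (by positivity), sq_sqrt (by positivity),
    ← exp_nat_mul]
  field_simp
  congr 2
  push_cast
  ring

lemma integral_norm_OLCT_gaussianChirp_sq (a b d τ η : ℝ) (hb : b ≠ 0) (c₀ : ℂ) {cp : ℝ}
    (hcp : 0 < cp) (tm ξm : ℝ) :
    ∫ ξ : ℝ, ‖OLCT a b d τ η (gaussianChirp c₀ cp tm ((ξm - τ) / b) (a / (2 * b))) ξ‖ ^ 2 =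
      ∫ t : ℝ, ‖gaussianChirp c₀ cp tm ((ξm - τ) / b) (a / (2 * b)) t‖ ^ 2 := by
  simp_rw [norm_OLCT_gaussianChirp_sq a b d τ η hb c₀ hcp, norm_gaussianChirp_sq,
    integral_shifted_gaussian]
  have hwidth : √(π / (2 * cp * b ^ 2)⁻¹) = 2 * cp * |b| * √(π / (2 * cp)) := by
    rw [show π / (2 * cp * b ^ 2)⁻¹ = (2 * cp * |b|) ^ 2 * (π / (2 * cp)) by
        rw [mul_pow, sq_abs]; field_simp,
      sqrt_mul (by positivity), sqrt_sq (by positivity)]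
  rw [hwidth]
  field_simp

theorem heisenberg_uncertainty_olct_equality_general (a b d τ η : ℝ)
    (hb : b ≠ 0) (tm ξm : ℝ)
    (c₀ : ℂ) (cp : ℝ) (hcp : 0 < cp)
    (f : ℝ → ℂ)
    (hf : f = fun t : ℝ => c₀ * Complex.exp (-((cp : ℂ) * ((t : ℂ) - (tm : ℂ)) ^ 2)) *
      Complex.exp (Complex.I *
        ((((ξm - τ) / b) * t - (a / (2 * b)) * t ^ 2 : ℝ) : ℂ))) :
    (∫ t : ℝ, (t - tm) ^ 2 * ‖f t‖ ^ 2) *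
      (∫ ξ : ℝ, (ξ - ξm) ^ 2 * ‖OLCT a b d τ η f ξ‖ ^ 2) =
    (b ^ 2 / 4) * (∫ t : ℝ, ‖f t‖ ^ 2) ^ 2 := by
  replace hf : f = gaussianChirp c₀ cp tm ((ξm - τ) / b) (a / (2 * b)) := hf
  have hvariance_time : ∫ t : ℝ, (t - tm) ^ 2 * ‖f t‖ ^ 2 =
      (2 * (2 * cp))⁻¹ * ∫ t : ℝ, ‖f t‖ ^ 2 := by
    simp_rw [hf, norm_gaussianChirp_sq]
    exact integral_sub_sq_mul_shifted_gaussian (by positivity) _ _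
  have hvariance_freq : ∫ ξ : ℝ, (ξ - ξm) ^ 2 * ‖OLCT a b d τ η f ξ‖ ^ 2 =
      (2 * (2 * cp * b ^ 2)⁻¹)⁻¹ * ∫ ξ : ℝ, ‖OLCT a b d τ η f ξ‖ ^ 2 := by
    simp_rw [hf, norm_OLCT_gaussianChirp_sq a b d τ η hb c₀ hcp]
    exact integral_sub_sq_mul_shifted_gaussian (by positivity) _ _
  have hparseval : ∫ ξ : ℝ, ‖OLCT a b d τ η f ξ‖ ^ 2 = ∫ t : ℝ, ‖f t‖ ^ 2 :=
    hf ▸ integral_norm_OLCT_gaussianChirp_sq a b d τ η hb c₀ hcp tm ξm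
  rw [hvariance_time, hvariance_freq, hparseval]
  field_simp
  ring

/-- **Equality case of the second-order Heisenberg uncertainty principle in the OLCT domain
(equation (72)).** The Gaussian chirp
`f(t) = c₀ e^{−c_p(t−tₘ)²} e^{i(((ξₘ−τ)/b)t − (a/(2b))t²)}` saturates the bound of
Corollary 3.2:
`(∫ (t−tₘ)²|f(t)|² dt)(∫ (ξ−ξₘ)²|O_f^J(ξ)|² dξ) = (b²/4)(∫ |f(t)|² dt)²`. -/
theorem heisenberg_uncertainty_olct_equality (a b c d τ η : ℝ)
    (hb : b ≠ 0) (hdet : a * d - b * c = 1) (tm ξm : ℝ)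
    (c₀ : ℂ) (hc₀ : c₀ ≠ 0) (cp : ℝ) (hcp : 0 < cp)
    (f : ℝ → ℂ)
    (hf : f = fun t : ℝ => c₀ * Complex.exp (-((cp : ℂ) * ((t : ℂ) - (tm : ℂ)) ^ 2)) *
      Complex.exp (Complex.I *
        ((((ξm - τ) / b) * t - (a / (2 * b)) * t ^ 2 : ℝ) : ℂ))) :
    (∫ t : ℝ, (t - tm) ^ 2 * ‖f t‖ ^ 2) *
      (∫ ξ : ℝ, (ξ - ξm) ^ 2 * ‖OLCT a b d τ η f ξ‖ ^ 2) =
    (b ^ 2 / 4) * (∫ t : ℝ, ‖f t‖ ^ 2) ^ 2 :=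
  heisenberg_uncertainty_olct_equality_general a b d τ η hb tm ξm c₀ cp hcp f hf
end

section
/- Let u, v, h : ℝ → ℂ be square-integrable functions with ∫_ℝ |h(t)|² dt = 1. Set x₀ = ∫_ℝ |v(t)||h(t)| dt, y₀ = ∫_ℝ |u(t)||h(t)| dt, and A = ‖u‖₂ x₀ − ‖v‖₂ y₀, where ‖·‖₂ denotes the L² norm. Then ‖u‖₂² ‖v‖₂² − A² ≥ ( ∫_ℝ |u(t)||v(t)| dt )². -/
/-!
Pass to the real functions `|u|, |v|, |h|` in `L²`. Projecting `|u|` and `|v|` onto the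
orthogonal complement of the unit vector `|h|` and applying Cauchy–Schwarz there says that the
Gram determinant of `|u|, |v|, |h|` is nonnegative. The claimed bound differs from that
determinant by `2 x₀ y₀ (‖u‖₂ ‖v‖₂ - ∫ |u||v|)`, which is nonnegative by Cauchy–Schwarz once more.
-/

open MeasureTheory Real
open scoped RealInnerProductSpace

section InnerProductSpace

variable {E : Type*} [NormedAddCommGroup E] [InnerProductSpace ℝ E]

lemma real_inner_sub_inner_smul_sub_inner_smul (f g e : E) (he : ‖e‖ = 1) :
    ⟪f - ⟪f, e⟫ • e, g - ⟪g, e⟫ • e⟫ = ⟪f, g⟫ - ⟪f, e⟫ * ⟪g, e⟫ := by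
  simp only [inner_sub_left, inner_sub_right, real_inner_smul_left, real_inner_smul_right,
    real_inner_self_eq_norm_sq, he, real_inner_comm e]
  ring

lemma gram_det_nonneg_of_norm_eq_one (f g e : E) (he : ‖e‖ = 1) :
    (⟪f, g⟫ - ⟪f, e⟫ * ⟪g, e⟫) ^ 2 ≤ (‖f‖ ^ 2 - ⟪f, e⟫ ^ 2) * (‖g‖ ^ 2 - ⟪g, e⟫ ^ 2) := by
  have cs := real_inner_mul_inner_self_le (f - ⟪f, e⟫ • e) (g - ⟪g, e⟫ • e)
  simp only [real_inner_sub_inner_smul_sub_inner_smul _ _ _ he, real_inner_self_eq_norm_sq]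
    at cs
  linarith

lemma real_inner_sq_le_of_inner_nonneg (f g e : E) (he : ‖e‖ = 1) (hfe : 0 ≤ ⟪f, e⟫)
    (hge : 0 ≤ ⟪g, e⟫) :
    ⟪f, g⟫ ^ 2 ≤ ‖f‖ ^ 2 * ‖g‖ ^ 2 - (‖f‖ * ⟪g, e⟫ - ‖g‖ * ⟪f, e⟫) ^ 2 := by
  have gram := gram_det_nonneg_of_norm_eq_one f g e he
  have cs := real_inner_le_norm f g
  linear_combination gram + 2 * mul_nonneg (mul_nonneg hfe hge) (sub_nonneg.2 cs)

end InnerProductSpace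

namespace MeasureTheory

variable {α : Type*} [MeasurableSpace α] {μ : Measure α} {f g : α → ℝ}

lemma MemLp.inner_toLp (hf : MemLp f 2 μ) (hg : MemLp g 2 μ) :
    ⟪hf.toLp f, hg.toLp g⟫ = ∫ a, f a * g a ∂μ := by
  rw [L2.inner_def]
  refine integral_congr_ae ?_
  filter_upwards [hf.coeFn_toLp, hg.coeFn_toLp] with a hfa hga
  simp [hfa, hga, mul_comm]

lemma MemLp.norm_toLp_sq (hf : MemLp f 2 μ) : ‖hf.toLp f‖ ^ 2 = ∫ a, f a ^ 2 ∂μ := by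
  rw [← real_inner_self_eq_norm_sq, hf.inner_toLp hf]
  simp only [sq]

end MeasureTheory

/-- **The Gram-determinant key inequality (used in the proof of Theorem 3.4).**
For square-integrable `u, v, h` with `∫ |h|² = 1`, setting `x₀ = ∫ |v||h|`,
`y₀ = ∫ |u||h|` and `A = ‖u‖₂ x₀ − ‖v‖₂ y₀`, one has
`‖u‖₂² ‖v‖₂² − A² ≥ (∫ |u(t)||v(t)| dt)²`. -/
theorem gram_determinant_inequality (u v h : ℝ → ℂ)
    (hu : MemLp u 2 (volume : Measure ℝ))
    (hv : MemLp v 2 (volume : Measure ℝ))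
    (hh : MemLp h 2 (volume : Measure ℝ))
    (hnorm : ∫ t : ℝ, ‖h t‖ ^ 2 = 1) :
    (∫ t : ℝ, ‖u t‖ ^ 2) * (∫ t : ℝ, ‖v t‖ ^ 2) -
      (Real.sqrt (∫ t : ℝ, ‖u t‖ ^ 2) * (∫ t : ℝ, ‖v t‖ * ‖h t‖) -
        Real.sqrt (∫ t : ℝ, ‖v t‖ ^ 2) * (∫ t : ℝ, ‖u t‖ * ‖h t‖)) ^ 2 ≥
    (∫ t : ℝ, ‖u t‖ * ‖v t‖) ^ 2 := by
  have hU := hu.norm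
  have hV := hv.norm
  have hH := hh.norm
  have hH_unit : ‖hH.toLp _‖ = 1 := by
    rw [← pow_eq_one_iff_of_nonneg (norm_nonneg _) two_ne_zero, hH.norm_toLp_sq, hnorm]
  have key := real_inner_sq_le_of_inner_nonneg _ _ _ hH_unit
    (by rw [hU.inner_toLp hH]; positivity) (by rw [hV.inner_toLp hH]; positivity)
  rwa [hU.inner_toLp hV, hU.inner_toLp hH, hV.inner_toLp hH, hU.norm_toLp_sq, hV.norm_toLp_sq,
    ← Real.sqrt_sq (norm_nonneg (hU.toLp _)), ← Real.sqrt_sq (norm_nonneg (hV.toLp _)),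
    hU.norm_toLp_sq, hV.norm_toLp_sq] at key
end
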